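/- arXiv:2101.08161 — 3 statements merged into one kernel-verified Lean document; each statement's English description precedes it below -/
import Mathlib

section
/- If x = ∑_{k=1}^∞ ε_k/(q_1⋯q_k) = u/v is rational with v ≥ 1 and |u| ≤ v, then for every n, σⁿ(x) = u_n/v where u_n = u·q_1⋯q_n − v·∑_{j=1}^{n} ε_j q_{j+1}⋯q_n is an integer with |u_n| ≤ v; hence by pigeonhole there exist n < n+m with σⁿ(x) = σ^{n+m}(x). -/
/-- The shift operator of a (positive) Cantor expansion (0-based indexing). -/
noncomputable def cantorShift (q ε : ℕ → ℕ) (n : ℕ) : ℝ :=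
  ∑' k : ℕ, (ε (n + k) : ℝ) / ∏ i ∈ Finset.Ico n (n + k + 1), (q i : ℝ)

/-- The integer `u_n = u·q_1⋯q_n − v·∑_{j=1}^{n} ε_j q_{j+1}⋯q_n` (0-based indexing). -/
def cantorNum (q ε : ℕ → ℕ) (u : ℤ) (v : ℕ) (n : ℕ) : ℤ :=
  u * ∏ i ∈ Finset.range n, (q i : ℤ)
    - v * ∑ j ∈ Finset.range n, (ε j : ℤ) * ∏ i ∈ Finset.Ico (j + 1) n, (q i : ℤ)

/-!
Multiplying by `q n` and subtracting the digit `ε n` passes from `σⁿ(x)` to `σⁿ⁺¹(x)`, and the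
same affine step applied to the numerator `u_n` gives `u_{n+1}`; so `σⁿ(x) = u_n / v` by
induction. Since a Cantor expansion with admissible digits telescopes to a value in `[0, 1]`,
the integers `u_n` lie in `[0, v]`, and the pigeonhole principle yields a repeated shift.
-/

open Finset

section CantorShift

variable {q ε : ℕ → ℕ}

lemma cantorShift_term_le_sub (hq : ∀ k, 0 < q k) (hε : ∀ k, ε k ≤ q k - 1) (n k : ℕ) :
    (ε (n + k) : ℝ) / ∏ i ∈ Ico n (n + k + 1), (q i : ℝ)
      ≤ 1 / ∏ i ∈ Ico n (n + k), (q i : ℝ) - 1 / ∏ i ∈ Ico n (n + k + 1), (q i : ℝ) := by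
  have hP : 0 < ∏ i ∈ Ico n (n + k), (q i : ℝ) := prod_pos fun i _ => by exact_mod_cast hq i
  have hqk : (0 : ℝ) < q (n + k) := by exact_mod_cast hq (n + k)
  have hεq : ε (n + k) + 1 ≤ q (n + k) := by have := hε (n + k); have := hq (n + k); omega
  have hεqR : (ε (n + k) : ℝ) + 1 ≤ q (n + k) := by exact_mod_cast hεq
  rw [prod_Ico_succ_top (by omega), div_le_iff₀ (by positivity)]
  field_simp
  linarith

lemma sum_range_cantorShift_term_le_one (hq : ∀ k, 0 < q k) (hε : ∀ k, ε k ≤ q k - 1)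
    (n N : ℕ) :
    ∑ k ∈ range N, (ε (n + k) : ℝ) / ∏ i ∈ Ico n (n + k + 1), (q i : ℝ) ≤ 1 := by
  have hP : 0 < ∏ i ∈ Ico n (n + N), (q i : ℝ) := prod_pos fun i _ => by exact_mod_cast hq i
  calc ∑ k ∈ range N, (ε (n + k) : ℝ) / ∏ i ∈ Ico n (n + k + 1), (q i : ℝ)
      ≤ ∑ k ∈ range N, (1 / ∏ i ∈ Ico n (n + k), (q i : ℝ)
          - 1 / ∏ i ∈ Ico n (n + (k + 1)), (q i : ℝ)) :=
        sum_le_sum fun k _ => cantorShift_term_le_sub hq hε n k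
    _ = 1 - 1 / ∏ i ∈ Ico n (n + N), (q i : ℝ) := by
        rw [sum_range_sub' (fun k => 1 / ∏ i ∈ Ico n (n + k), (q i : ℝ))]
        simp
    _ ≤ 1 := by
        have : 0 < 1 / ∏ i ∈ Ico n (n + N), (q i : ℝ) := by positivity
        linarith

lemma cantorShift_term_nonneg (n k : ℕ) :
    0 ≤ (ε (n + k) : ℝ) / ∏ i ∈ Ico n (n + k + 1), (q i : ℝ) := by
  positivity

lemma summable_cantorShift_term (hq : ∀ k, 0 < q k) (hε : ∀ k, ε k ≤ q k - 1) (n : ℕ) :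
    Summable fun k => (ε (n + k) : ℝ) / ∏ i ∈ Ico n (n + k + 1), (q i : ℝ) :=
  summable_of_sum_range_le (cantorShift_term_nonneg n) (sum_range_cantorShift_term_le_one hq hε n)

lemma cantorShift_nonneg (n : ℕ) : 0 ≤ cantorShift q ε n :=
  tsum_nonneg (cantorShift_term_nonneg n)

lemma cantorShift_le_one (hq : ∀ k, 0 < q k) (hε : ∀ k, ε k ≤ q k - 1) (n : ℕ) :
    cantorShift q ε n ≤ 1 :=
  Real.tsum_le_of_sum_range_le (cantorShift_term_nonneg n)
    (sum_range_cantorShift_term_le_one hq hε n)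

lemma cantorShift_zero :
    cantorShift q ε 0 = ∑' k, (ε k : ℝ) / ∏ i ∈ range (k + 1), (q i : ℝ) := by
  simp only [cantorShift, zero_add, range_eq_Ico]

lemma cantorShift_succ (hq : ∀ k, 0 < q k) (hε : ∀ k, ε k ≤ q k - 1) (n : ℕ) :
    cantorShift q ε (n + 1) = q n * cantorShift q ε n - ε n := by
  have hqn : (q n : ℝ) ≠ 0 := by exact_mod_cast (hq n).ne'
  have htail : ∀ k, (ε (n + (k + 1)) : ℝ) / ∏ i ∈ Ico n (n + (k + 1) + 1), (q i : ℝ)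
      = (q n : ℝ)⁻¹ * ((ε (n + 1 + k) : ℝ) / ∏ i ∈ Ico (n + 1) (n + 1 + k + 1), (q i : ℝ)) := by
    intro k
    rw [prod_eq_prod_Ico_succ_bot (by omega), show n + (k + 1) = n + 1 + k by omega]
    field_simp
  have hsplit : cantorShift q ε n = ε n / q n + (q n : ℝ)⁻¹ * cantorShift q ε (n + 1) := by
    rw [cantorShift, (summable_cantorShift_term hq hε n).tsum_eq_zero_add, tsum_congr htail,
      tsum_mul_left, cantorShift]
    simp only [add_zero, Nat.Ico_succ_singleton, prod_singleton]
  rw [hsplit]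
  field_simp
  ring

lemma cantorNum_zero (u : ℤ) (v : ℕ) : cantorNum q ε u v 0 = u := by
  simp [cantorNum]

lemma cantorNum_succ (u : ℤ) (v n : ℕ) :
    cantorNum q ε u v (n + 1) = q n * cantorNum q ε u v n - v * ε n := by
  have hIco : ∀ j ∈ range n, ∏ i ∈ Ico (j + 1) (n + 1), (q i : ℤ)
      = (∏ i ∈ Ico (j + 1) n, (q i : ℤ)) * q n := fun j hj =>
    prod_Ico_succ_top (Nat.succ_le_of_lt (mem_range.mp hj)) _
  rw [cantorNum, cantorNum, prod_range_succ, sum_range_succ, Ico_self, prod_empty,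
    sum_congr rfl fun j hj => by rw [hIco j hj, ← mul_assoc], ← sum_mul]
  ring

lemma cantorShift_eq_cantorNum_div (hq : ∀ k, 0 < q k)
    (hε : ∀ k, ε k ≤ q k - 1) {u : ℤ} {v : ℕ} (hv : v ≠ 0)
    (h₀ : cantorShift q ε 0 = (u : ℝ) / v) (n : ℕ) :
    cantorShift q ε n = (cantorNum q ε u v n : ℝ) / v := by
  induction n with
  | zero => rw [h₀, cantorNum_zero]
  | succ n ih =>
    rw [cantorShift_succ hq hε, ih, cantorNum_succ]
    push_cast
    field_simp

end CantorShift

lemma mem_Icc_of_div_mem_Icc {a : ℤ} {v : ℕ} (hv : 0 < v) (h : (a : ℝ) / v ∈ Set.Icc 0 1) :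
    a ∈ Icc 0 (v : ℤ) := by
  have hvR : (0 : ℝ) < v := by exact_mod_cast hv
  obtain ⟨h0, h1⟩ := h
  rw [le_div_iff₀ hvR, zero_mul] at h0
  rw [div_le_one₀ hvR] at h1
  exact mem_Icc.mpr ⟨by exact_mod_cast h0, by exact_mod_cast h1⟩

lemma exists_pos_add_eq_of_forall_mem {α : Type*} {f : ℕ → α} {s : Set α} (hs : s.Finite)
    (hf : ∀ n, f n ∈ s) : ∃ n m, 1 ≤ m ∧ f n = f (n + m) := by
  obtain ⟨a, b, hab, heq⟩ := Set.Finite.exists_lt_map_eq_of_forall_mem hf hs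
  exact ⟨a, b - a, by omega, by rwa [Nat.add_sub_cancel' hab.le]⟩

theorem cantor_rational_shift_values_general (q ε : ℕ → ℕ) (hq : ∀ k, 2 ≤ q k)
    (hε : ∀ k, ε k ≤ q k - 1) (u : ℤ) (v : ℕ) (hv : 1 ≤ v) (x : ℝ)
    (hx : x = ∑' k : ℕ, (ε k : ℝ) / ∏ i ∈ Finset.range (k + 1), (q i : ℝ))
    (hxr : x = (u : ℝ) / v) :
    (∀ n : ℕ, cantorShift q ε n = (cantorNum q ε u v n : ℝ) / v
        ∧ |cantorNum q ε u v n| ≤ (v : ℤ))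
      ∧ ∃ n m : ℕ, 1 ≤ m ∧ cantorShift q ε n = cantorShift q ε (n + m) := by
  have hq₀ : ∀ k, 0 < q k := fun k => zero_lt_two.trans_le (hq k)
  have hshift := cantorShift_eq_cantorNum_div hq₀ hε (by omega : v ≠ 0)
    (cantorShift_zero.trans (hx.symm.trans hxr))
  have hnum : ∀ n, cantorNum q ε u v n ∈ Icc 0 (v : ℤ) := fun n =>
    mem_Icc_of_div_mem_Icc hv (hshift n ▸ ⟨cantorShift_nonneg n, cantorShift_le_one hq₀ hε n⟩)
  refine ⟨fun n => ⟨hshift n, ?_⟩, ?_⟩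
  · obtain ⟨h0, hle⟩ := mem_Icc.mp (hnum n)
    exact abs_le.mpr ⟨by omega, hle⟩
  · obtain ⟨n, m, hm, heq⟩ := exists_pos_add_eq_of_forall_mem (Icc 0 (v : ℤ)).finite_toSet hnum
    exact ⟨n, m, hm, by rw [hshift, hshift, heq]⟩

/-- If `x = u/v` is rational with `v ≥ 1`, `|u| ≤ v`, then
`σⁿ(x) = u_n/v` with `|u_n| ≤ v` for every `n`, and hence (pigeonhole) there are
`n` and `m ≥ 1` with `σⁿ(x) = σ^{n+m}(x)`. -/
theorem cantor_rational_shift_values (q ε : ℕ → ℕ) (hq : ∀ k, 2 ≤ q k)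
    (hε : ∀ k, ε k ≤ q k - 1) (u : ℤ) (v : ℕ) (hv : 1 ≤ v) (hu : |u| ≤ (v : ℤ)) (x : ℝ)
    (hx : x = ∑' k : ℕ, (ε k : ℝ) / ∏ i ∈ Finset.range (k + 1), (q i : ℝ))
    (hxr : x = (u : ℝ) / v) :
    (∀ n : ℕ, cantorShift q ε n = (cantorNum q ε u v n : ℝ) / v
        ∧ |cantorNum q ε u v n| ≤ (v : ℤ))
      ∧ ∃ n m : ℕ, 1 ≤ m ∧ cantorShift q ε n = cantorShift q ε (n + m) :=
  cantor_rational_shift_values_general q ε hq hε u v hv x hx hxr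
end

section
/- Let q = min_n q_n and let ε ∈ {0, 1, …, q − 1} be fixed. Then σⁿ(x) = x = ε/(q − 1) for all n if and only if ε_n = ε·(q_n − 1)/(q − 1) is a nonnegative integer for all n ≥ 1. -/
/-!
Writing `P n k = q_n ⋯ q_{n+k-1}`, the shift satisfies `σⁿ(x) = (ε_n + σⁿ⁺¹(x)) / q_n`, so a constant
shift `c` forces `ε_n = c (q_n - 1)`. Conversely, the expansion with digits `q_k - 1` telescopes,
`(q_{n+k} - 1) / P n (k+1) = 1 / P n k - 1 / P n (k+1)`, hence sums to `1` from every position, and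
digits `c (q_k - 1)` give the constant shift `c`.
-/

open Finset Filter Topology

section CantorShift

variable {q ε : ℕ → ℕ}

lemma two_pow_le_prod_Ico (hq : ∀ k, 2 ≤ q k) (n k : ℕ) :
    (2 : ℝ) ^ k ≤ ∏ i ∈ Ico n (n + k), (q i : ℝ) :=
  calc (2 : ℝ) ^ k = ∏ _i ∈ Ico n (n + k), (2 : ℝ) := by simp
    _ ≤ ∏ i ∈ Ico n (n + k), (q i : ℝ) :=
      prod_le_prod (fun _ _ => zero_le_two) fun i _ => by exact_mod_cast hq i

lemma prod_Ico_pos (hq : ∀ k, 2 ≤ q k) (n k : ℕ) : 0 < ∏ i ∈ Ico n (n + k), (q i : ℝ) :=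
  (pow_pos two_pos k).trans_le (two_pow_le_prod_Ico hq n k)

lemma hasSum_sub_one_div_prod_Ico (hq : ∀ k, 2 ≤ q k) (n : ℕ) :
    HasSum (fun k => ((q (n + k) : ℝ) - 1) / ∏ i ∈ Ico n (n + k + 1), (q i : ℝ)) 1 := by
  set P : ℕ → ℝ := fun k => ∏ i ∈ Ico n (n + k), (q i : ℝ)
  have hterm : ∀ k, ((q (n + k) : ℝ) - 1) / ∏ i ∈ Ico n (n + k + 1), (q i : ℝ)
      = (P k)⁻¹ - (P (k + 1))⁻¹ := fun k => by
    have hPk := (prod_Ico_pos hq n k).ne'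
    have hqk : (q (n + k) : ℝ) ≠ 0 := by have := hq (n + k); positivity
    simp only [P, ← add_assoc, prod_Ico_succ_top (Nat.le_add_right n k)]
    field_simp
  have hP_inv : Tendsto (fun k => (P k)⁻¹) atTop (𝓝 0) :=
    tendsto_inv_atTop_zero.comp <| tendsto_atTop_mono (two_pow_le_prod_Ico hq n)
      (tendsto_pow_atTop_atTop_of_one_lt one_lt_two)
  have hnonneg : ∀ k, 0 ≤ ((q (n + k) : ℝ) - 1) / ∏ i ∈ Ico n (n + k + 1), (q i : ℝ) :=
    fun k => div_nonneg (by rw [← Nat.cast_pred (by linarith [hq (n + k)])]; positivity)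
      (prod_Ico_pos hq n (k + 1)).le
  rw [hasSum_iff_tendsto_nat_of_nonneg hnonneg]
  simp_rw [hterm, sum_range_sub' (fun k => (P k)⁻¹)]
  simpa [P] using hP_inv.const_sub 1

lemma summable_cantorShift (hq : ∀ k, 2 ≤ q k) (hε : ∀ k, ε k ≤ q k - 1) (n : ℕ) :
    Summable fun k => (ε (n + k) : ℝ) / ∏ i ∈ Ico n (n + k + 1), (q i : ℝ) := by
  refine (hasSum_sub_one_div_prod_Ico hq n).summable.of_nonneg_of_le
    (fun k => div_nonneg (Nat.cast_nonneg _) (prod_Ico_pos hq n (k + 1)).le) fun k => ?_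
  have hdigit : (ε (n + k) : ℝ) ≤ q (n + k) - 1 := by
    rw [← Nat.cast_pred (by linarith [hq (n + k)])]; exact_mod_cast hε (n + k)
  exact div_le_div_of_nonneg_right hdigit (prod_Ico_pos hq n (k + 1)).le

lemma cantorShift_eq_div (hq : ∀ k, 2 ≤ q k) (hε : ∀ k, ε k ≤ q k - 1) (n : ℕ) :
    cantorShift q ε n = (ε n + cantorShift q ε (n + 1)) / q n := by
  have hterm : ∀ k, (ε (n + (k + 1)) : ℝ) / ∏ i ∈ Ico n (n + (k + 1) + 1), (q i : ℝ)
      = (q n : ℝ)⁻¹ * ((ε (n + 1 + k) : ℝ) / ∏ i ∈ Ico (n + 1) (n + 1 + k + 1), (q i : ℝ)) :=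
    fun k => by
      rw [prod_eq_prod_Ico_succ_bot (by omega), show n + (k + 1) = n + 1 + k by omega]
      ring
  rw [cantorShift, (summable_cantorShift hq hε n).tsum_eq_zero_add, tsum_congr hterm,
    tsum_mul_left, cantorShift]
  simp only [add_zero, Nat.Ico_succ_singleton, prod_singleton]
  ring

theorem cantorShift_eq_const_iff (hq : ∀ k, 2 ≤ q k) (hε : ∀ k, ε k ≤ q k - 1) (c : ℝ) :
    (∀ n, cantorShift q ε n = c) ↔ ∀ n, (ε n : ℝ) = c * (q n - 1) := by
  constructor
  · intro hσ n
    have hqn : (q n : ℝ) ≠ 0 := by have := hq n; positivity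
    have h := cantorShift_eq_div hq hε n
    rw [hσ n, hσ (n + 1), eq_div_iff hqn] at h
    linarith
  · intro hdigit n
    calc cantorShift q ε n
        = ∑' k, c * (((q (n + k) : ℝ) - 1) / ∏ i ∈ Ico n (n + k + 1), (q i : ℝ)) :=
          tsum_congr fun k => by rw [hdigit, mul_div_assoc]
      _ = c := by rw [(hasSum_sub_one_div_prod_Ico hq n).mul_left c |>.tsum_eq, mul_one]

end CantorShift

theorem cantor_fixed_point_iff_general (q ε : ℕ → ℕ) (hq : ∀ k, 2 ≤ q k)
    (hε : ∀ k, ε k ≤ q k - 1) (qm : ℕ)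
    (ε₀ : ℕ) (x : ℝ)
    (hx : x = ∑' k : ℕ, (ε k : ℝ) / ∏ i ∈ Finset.range (k + 1), (q i : ℝ)) :
    ((∀ n : ℕ, cantorShift q ε n = x) ∧ x = (ε₀ : ℝ) / ((qm : ℝ) - 1))
      ↔ ∀ n : ℕ, (ε n : ℝ) = (ε₀ : ℝ) * ((q n : ℝ) - 1) / ((qm : ℝ) - 1) := by
  have hx₀ : cantorShift q ε 0 = x := by simp only [hx, cantorShift, zero_add, range_eq_Ico]
  simp_rw [← div_mul_eq_mul_div, ← cantorShift_eq_const_iff hq hε]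
  constructor
  · rintro ⟨hσ, rfl⟩
    exact hσ
  · intro hσ
    have hxc := hx₀.symm.trans (hσ 0)
    exact ⟨fun n => (hσ n).trans hxc.symm, hxc⟩

/-- With `q = min_n q_n` and a fixed digit `ε₀ ∈ {0,…,q−1}`,
`σⁿ(x) = x = ε₀/(q−1)` holds for all `n` iff `ε_n = ε₀·(q_n − 1)/(q − 1)`
(a nonnegative integer, automatic since `ε_n : ℕ`) for all `n`. -/
theorem cantor_fixed_point_iff (q ε : ℕ → ℕ) (hq : ∀ k, 2 ≤ q k)
    (hε : ∀ k, ε k ≤ q k - 1) (qm : ℕ) (hqm_le : ∀ n, qm ≤ q n) (hqm_mem : ∃ n, q n = qm)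
    (ε₀ : ℕ) (hε₀ : ε₀ ≤ qm - 1) (x : ℝ)
    (hx : x = ∑' k : ℕ, (ε k : ℝ) / ∏ i ∈ Finset.range (k + 1), (q i : ℝ)) :
    ((∀ n : ℕ, cantorShift q ε n = x) ∧ x = (ε₀ : ℝ) / ((qm : ℝ) - 1))
      ↔ ∀ n : ℕ, (ε n : ℝ) = (ε₀ : ℝ) * ((q n : ℝ) - 1) / ((qm : ℝ) - 1) :=
  cantor_fixed_point_iff_general q ε hq hε qm ε₀ x hx
end

section
/- If x = u/v is rational with v ≥ 1, u ∈ ℤ, |u| ≤ v, and x has sign-variable Cantor expansion with digits (ε_n), then σⁿ(x) = u_n/v where u_n = u·q_1⋯q_n − v·∑_{j=1}^{n} a_j ε_j q_{j+1}⋯q_n ∈ ℤ satisfies |u_n| ≤ v; consequently there exist n and m ≥ 1 with u_n = u_{n+m}, and there is an infinite set of indices on which u_n is constant. -/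
/-!
Both the shift and `u_n / v` obey the recursion `σⁿ⁺¹ = q_n σⁿ - a_n ε_n`, and they agree at
`n = 0` because `x = u / v`; hence they agree everywhere. Since `ε_k ≤ q_k - 1`, the `k`-th term
of any tail series is bounded in absolute value by `1/Q_k - 1/Q_{k+1}` (`Q_k` the product of the
first `k` bases), which telescopes: every tail lies in `[-1, 1]`. So the integers `u_n` take
values in `[-v, v]`, and the pigeonhole principle gives the repetitions.
-/

-- The sign `a_n`: `-1` if `n ∈ N_B`, `1` otherwise (real-valued).
open Classical in
noncomputable def cantorSign (B : Set ℕ) (n : ℕ) : ℝ :=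
  if n ∈ B then -1 else 1

-- The sign `a_n` as an integer.
open Classical in
noncomputable def cantorSignZ (B : Set ℕ) (n : ℕ) : ℤ :=
  if n ∈ B then -1 else 1

/-- The shift operator of a sign-variable Cantor expansion (0-based indexing). -/
noncomputable def signCantorShift (B : Set ℕ) (q ε : ℕ → ℕ) (n : ℕ) : ℝ :=
  ∑' k : ℕ, cantorSign B (n + k) * (ε (n + k) : ℝ) / ∏ i ∈ Finset.Ico n (n + k + 1), (q i : ℝ)

/-- The integer `u_n = u·q_1⋯q_n − v·∑_{j=1}^{n} a_j ε_j q_{j+1}⋯q_n` (0-based). -/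
noncomputable def signCantorNum (B : Set ℕ) (q ε : ℕ → ℕ) (u : ℤ) (v : ℕ) (n : ℕ) : ℤ :=
  u * ∏ i ∈ Finset.range n, (q i : ℤ)
    - v * ∑ j ∈ Finset.range n,
        cantorSignZ B j * (ε j : ℤ) * ∏ i ∈ Finset.Ico (j + 1) n, (q i : ℤ)

open Finset

noncomputable def cantorSeries (q : ℕ → ℕ) (d : ℕ → ℝ) : ℝ :=
  ∑' k, d k / ∏ i ∈ range (k + 1), (q i : ℝ)

section CantorSeries

variable {q : ℕ → ℕ} {d : ℕ → ℝ}

lemma abs_div_prod_range_le (hq : ∀ k, 0 < q k) (hd : ∀ k, |d k| ≤ q k - 1) (k : ℕ) :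
    |d k / ∏ i ∈ range (k + 1), (q i : ℝ)|
      ≤ (∏ i ∈ range k, (q i : ℝ))⁻¹ - (∏ i ∈ range (k + 1), (q i : ℝ))⁻¹ := by
  have hP : 0 < ∏ i ∈ range k, (q i : ℝ) := prod_pos fun i _ => by exact_mod_cast hq i
  have hqk : (0 : ℝ) < q k := by exact_mod_cast hq k
  rw [prod_range_succ, abs_div, abs_of_pos (mul_pos hP hqk)]
  calc |d k| / ((∏ i ∈ range k, (q i : ℝ)) * q k)
      ≤ (q k - 1) / ((∏ i ∈ range k, (q i : ℝ)) * q k) := by gcongr; exact hd k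
    _ = _ := by field_simp

lemma sum_range_abs_div_prod_range_le_one (hq : ∀ k, 0 < q k) (hd : ∀ k, |d k| ≤ q k - 1)
    (n : ℕ) : ∑ k ∈ range n, |d k / ∏ i ∈ range (k + 1), (q i : ℝ)| ≤ 1 := by
  have hP : 0 < ∏ i ∈ range n, (q i : ℝ) := prod_pos fun i _ => by exact_mod_cast hq i
  calc ∑ k ∈ range n, |d k / ∏ i ∈ range (k + 1), (q i : ℝ)|
      ≤ ∑ k ∈ range n, ((∏ i ∈ range k, (q i : ℝ))⁻¹ - (∏ i ∈ range (k + 1), (q i : ℝ))⁻¹) :=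
        sum_le_sum fun k _ => abs_div_prod_range_le hq hd k
    _ = 1 - (∏ i ∈ range n, (q i : ℝ))⁻¹ := by
        rw [sum_range_sub']; simp
    _ ≤ 1 := by linarith [inv_pos.mpr hP]

lemma summable_cantorSeries (hq : ∀ k, 0 < q k) (hd : ∀ k, |d k| ≤ q k - 1) :
    Summable fun k => d k / ∏ i ∈ range (k + 1), (q i : ℝ) :=
  Summable.of_abs <| summable_of_sum_range_le (fun _ => abs_nonneg _)
    (sum_range_abs_div_prod_range_le_one hq hd)

lemma abs_cantorSeries_le_one (hq : ∀ k, 0 < q k) (hd : ∀ k, |d k| ≤ q k - 1) :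
    |cantorSeries q d| ≤ 1 := by
  have h := norm_tsum_le_tsum_norm (summable_cantorSeries hq hd).norm
  simp only [Real.norm_eq_abs] at h
  exact h.trans <| Real.tsum_le_of_sum_range_le (fun _ => abs_nonneg _)
    (sum_range_abs_div_prod_range_le_one hq hd)

lemma mul_cantorSeries (hq : ∀ k, 0 < q k) (hd : ∀ k, |d k| ≤ q k - 1) :
    q 0 * cantorSeries q d = d 0 + cantorSeries (fun k => q (k + 1)) (fun k => d (k + 1)) := by
  have hq0 : (q 0 : ℝ) ≠ 0 := by exact_mod_cast (hq 0).ne'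
  have htail : ∀ k, d (k + 1) / ∏ i ∈ range (k + 1 + 1), (q i : ℝ)
      = d (k + 1) / (∏ i ∈ range (k + 1), (q (i + 1) : ℝ)) / q 0 := fun k => by
    rw [prod_range_succ' _ (k + 1), div_div]
  rw [cantorSeries, (summable_cantorSeries hq hd).tsum_eq_zero_add, tsum_congr htail,
    tsum_div_const, cantorSeries]
  field_simp
  simp [hq0]

end CantorSeries

lemma Set.Finite.exists_infinite_setOf_eq {α β : Type*} [Infinite α] {f : α → β} {t : Set β}
    (ht : t.Finite) (hf : ∀ a, f a ∈ t) : ∃ c, {a | f a = c}.Infinite := by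
  by_contra! h
  exact Set.infinite_univ <| (ht.biUnion fun c _ => h c).subset
    fun a _ => Set.mem_biUnion (hf a) rfl

section SignCantor

variable (B : Set ℕ) {q ε : ℕ → ℕ}

lemma abs_cantorSign_mul_le (hq : ∀ k, 0 < q k) (hε : ∀ k, ε k ≤ q k - 1) (k : ℕ) :
    |cantorSign B k * ε k| ≤ q k - 1 := by
  have h : (ε k : ℝ) ≤ q k - 1 := by
    rw [← Nat.cast_one, ← Nat.cast_sub (hq k)]; exact_mod_cast hε k
  unfold cantorSign; split <;> simpa using h

lemma signCantorShift_eq_cantorSeries (n : ℕ) :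
    signCantorShift B q ε n
      = cantorSeries (fun k => q (n + k)) (fun k => cantorSign B (n + k) * ε (n + k)) := by
  refine tsum_congr fun k => ?_
  rw [prod_Ico_eq_prod_range, show n + k + 1 - n = k + 1 by omega]

lemma signCantorShift_zero :
    signCantorShift B q ε 0
      = ∑' n : ℕ, cantorSign B n * (ε n : ℝ) / ∏ i ∈ range (n + 1), (q i : ℝ) := by
  simp only [signCantorShift, zero_add, ← range_eq_Ico]

lemma abs_signCantorShift_le_one (hq : ∀ k, 0 < q k) (hε : ∀ k, ε k ≤ q k - 1) (n : ℕ) :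
    |signCantorShift B q ε n| ≤ 1 := by
  rw [signCantorShift_eq_cantorSeries]
  exact abs_cantorSeries_le_one (fun k => hq _) (fun k => abs_cantorSign_mul_le B hq hε _)

lemma signCantorShift_succ (hq : ∀ k, 0 < q k) (hε : ∀ k, ε k ≤ q k - 1) (n : ℕ) :
    signCantorShift B q ε (n + 1) = q n * signCantorShift B q ε n - cantorSign B n * ε n := by
  have h := mul_cantorSeries (q := fun k => q (n + k))
    (d := fun k => cantorSign B (n + k) * ε (n + k))
    (fun k => hq _) (fun k => abs_cantorSign_mul_le B hq hε _)
  have e : ∀ k, n + 1 + k = n + (k + 1) := fun k => by omega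
  simp only [add_zero] at h
  simp only [signCantorShift_eq_cantorSeries, e]
  linarith

lemma signCantorNum_succ (u : ℤ) (v n : ℕ) :
    signCantorNum B q ε u v (n + 1)
      = q n * signCantorNum B q ε u v n - v * (cantorSignZ B n * ε n) := by
  have hIco : ∀ j ∈ range n, ∏ i ∈ Ico (j + 1) (n + 1), (q i : ℤ)
      = (∏ i ∈ Ico (j + 1) n, (q i : ℤ)) * q n :=
    fun j hj => prod_Ico_succ_top (mem_range.mp hj) _
  simp only [signCantorNum, prod_range_succ, sum_range_succ, Ico_self, prod_empty]
  rw [sum_congr rfl fun j hj => by rw [hIco j hj, ← mul_assoc], ← sum_mul]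
  ring

lemma signCantorShift_eq_signCantorNum_div (hq : ∀ k, 0 < q k) (hε : ∀ k, ε k ≤ q k - 1)
    {u : ℤ} {v : ℕ} (hv : 1 ≤ v) (h₀ : signCantorShift B q ε 0 = u / v) (n : ℕ) :
    signCantorShift B q ε n = signCantorNum B q ε u v n / v := by
  induction n with
  | zero => simp [h₀, signCantorNum]
  | succ n ih =>
    have hv₀ : (v : ℝ) ≠ 0 := by positivity
    have hsign : (cantorSignZ B n : ℝ) = cantorSign B n := by
      unfold cantorSign cantorSignZ; split <;> norm_num
    rw [signCantorShift_succ B hq hε, ih, signCantorNum_succ]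
    push_cast [hsign]
    field_simp

end SignCantor

theorem sign_variable_rational_shift_values_general (B : Set ℕ) (q ε : ℕ → ℕ)
    (hq : ∀ k, 2 ≤ q k) (hε : ∀ k, ε k ≤ q k - 1) (u : ℤ) (v : ℕ) (hv : 1 ≤ v)
    (x : ℝ)
    (hx : x = ∑' n : ℕ, cantorSign B n * (ε n : ℝ) / ∏ i ∈ Finset.range (n + 1), (q i : ℝ))
    (hxr : x = (u : ℝ) / v) :
    (∀ n : ℕ, signCantorShift B q ε n = (signCantorNum B q ε u v n : ℝ) / v
        ∧ |signCantorNum B q ε u v n| ≤ (v : ℤ))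
      ∧ (∃ n m : ℕ, 1 ≤ m ∧ signCantorNum B q ε u v n = signCantorNum B q ε u v (n + m))
      ∧ (∃ S : Set ℕ, S.Infinite ∧ ∃ c : ℤ, ∀ n ∈ S, signCantorNum B q ε u v n = c) := by
  have hq₀ : ∀ k, 0 < q k := fun k => zero_lt_two.trans_le (hq k)
  have hshift : ∀ n, signCantorShift B q ε n = signCantorNum B q ε u v n / v :=
    signCantorShift_eq_signCantorNum_div B hq₀ hε hv (by rw [signCantorShift_zero, ← hx, hxr])
  have hbound : ∀ n, |signCantorNum B q ε u v n| ≤ v := fun n => by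
    have hv₀ : (0 : ℝ) < v := by positivity
    have h := abs_signCantorShift_le_one B hq₀ hε n
    rw [hshift n, abs_div, Nat.abs_cast, div_le_one hv₀] at h
    exact_mod_cast h
  have hmem : ∀ n, signCantorNum B q ε u v n ∈ Set.Icc (-(v : ℤ)) v := fun n =>
    abs_le.mp (hbound n)
  obtain ⟨n, n', hlt, heq⟩ := (Set.finite_Icc _ _).exists_lt_map_eq_of_forall_mem hmem
  obtain ⟨c, hc⟩ := (Set.finite_Icc _ _).exists_infinite_setOf_eq hmem
  refine ⟨fun n => ⟨hshift n, hbound n⟩, ⟨n, n' - n, by omega, ?_⟩, _, hc, c, fun _ h => h⟩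
  rwa [Nat.add_sub_cancel' hlt.le]

/-- If `x = u/v` with `v ≥ 1`, `|u| ≤ v`, has a sign-variable Cantor
expansion with digits `(ε_n)`, then `σⁿ(x) = u_n/v` with `u_n ∈ ℤ`, `|u_n| ≤ v`;
consequently `u_n = u_{n+m}` for some `n` and `m ≥ 1`, and `u_n` is constant on an
infinite set of indices. -/
theorem sign_variable_rational_shift_values (B : Set ℕ) (q ε : ℕ → ℕ)
    (hq : ∀ k, 2 ≤ q k) (hε : ∀ k, ε k ≤ q k - 1) (u : ℤ) (v : ℕ) (hv : 1 ≤ v)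
    (hu : |u| ≤ (v : ℤ)) (x : ℝ)
    (hx : x = ∑' n : ℕ, cantorSign B n * (ε n : ℝ) / ∏ i ∈ Finset.range (n + 1), (q i : ℝ))
    (hxr : x = (u : ℝ) / v) :
    (∀ n : ℕ, signCantorShift B q ε n = (signCantorNum B q ε u v n : ℝ) / v
        ∧ |signCantorNum B q ε u v n| ≤ (v : ℤ))
      ∧ (∃ n m : ℕ, 1 ≤ m ∧ signCantorNum B q ε u v n = signCantorNum B q ε u v (n + m))
      ∧ (∃ S : Set ℕ, S.Infinite ∧ ∃ c : ℤ, ∀ n ∈ S, signCantorNum B q ε u v n = c) :=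
  sign_variable_rational_shift_values_general B q ε hq hε u v hv x hx hxr
end
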